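/- Let E be a Dedekind orthocomplete GEA with SK-congruence ∼. Then the subequivalence relation ≲ (f ≲ e iff f ∼ e₁ for some e₁ ≤ e) is a preorder on E, and satisfies the Cantor–Schröder–Bernstein property: e ≲ f and f ≲ e imply e ∼ f. -/
import Mathlib


universe u

/-- A generalized effect algebra: partial operation encoded by a definedness
relation `perp` together with a total function `op` whose values are only
meaningful when `perp` holds. -/
class GEA (E : Type u) where
  zero : E
  perp : E → E → Prop
  op : E → E → E
  perp_comm : ∀ {e f : E}, perp e f → perp f e
  op_comm : ∀ {e f : E}, perp e f → op e f = op f e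
  assoc_perp₁ : ∀ {d e f : E}, perp e f → perp d (op e f) → perp d e
  assoc_perp₂ : ∀ {d e f : E}, perp e f → perp d (op e f) → perp (op d e) f
  assoc_eq : ∀ {d e f : E}, perp e f → perp d (op e f) →
    op d (op e f) = op (op d e) f
  perp_zero : ∀ e : E, perp e zero
  op_zero : ∀ e : E, op e zero = e
  cancel : ∀ {d e f : E}, perp d e → perp d f → op d e = op d f → e = f
  pos : ∀ {e f : E}, perp e f → op e f = zero → e = zero ∧ f = zero

namespace GEA

variable {E : Type u} [GEA E]

/-- `e ≤ f` iff `e ⊕ d = f` for some `d`. -/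
def le (e f : E) : Prop := ∃ d : E, perp e d ∧ op e d = f

/-- `p` is sharp. -/
def Sharp (p : E) : Prop := ∀ d : E, le d p → perp d p → d = zero

/-- `p` is principal. -/
def Principal (p : E) : Prop :=
  ∀ e f : E, le e p → le f p → perp e f → le (op e f) p

/-- An ideal of a GEA. -/
def Ideal (S : Set E) : Prop :=
  (∀ s t : E, s ∈ S → le t s → t ∈ S) ∧
  (∀ s t : E, s ∈ S → t ∈ S → perp s t → op s t ∈ S)

/-- `E = H ⊕ K` : a direct sum decomposition into two subsets. -/
def DirectSum (H K : Set E) : Prop :=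
  (∀ h k : E, h ∈ H → k ∈ K → perp h k) ∧
  (∀ e : E, ∃! p : E × E,
    p.1 ∈ H ∧ p.2 ∈ K ∧ perp p.1 p.2 ∧ op p.1 p.2 = e)

/-- `FinSum e s x` : `x` is the (well-defined) orthosum of the finite
subfamily of `e` indexed by the finset `s`. -/
inductive FinSum {I : Type} (e : I → E) : Finset I → E → Prop
  | empty : FinSum e ∅ zero
  | cons {s : Finset I} {i : I} {x : E} (h : i ∉ s) :
      FinSum e s x → perp (e i) x → FinSum e (Finset.cons i s h) (op (e i) x)

/-- A family is orthogonal iff all its finite partial orthosums exist. -/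
def OrthoFam {I : Type} (e : I → E) : Prop := ∀ s : Finset I, ∃ x : E, FinSum e s x

/-- `m` is the orthosum of the family `e` : the family is orthogonal and `m`
is the supremum of its finite partial orthosums. -/
def IsOrthosum {I : Type} (e : I → E) (m : E) : Prop :=
  OrthoFam e ∧ (∀ (s : Finset I) (x : E), FinSum e s x → le x m) ∧
  ∀ b : E, (∀ (s : Finset I) (x : E), FinSum e s x → le x b) → le m b

/-- Dedekind orthocompleteness. -/
def DedekindOC (E : Type u) [GEA E] : Prop :=
  ∀ (I : Type) (e : I → E), OrthoFam e →
    (∃ b : E, ∀ (s : Finset I) (x : E), FinSum e s x → le x b) →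
    ∃ m : E, IsOrthosum e m

/-- A Sherstnev–Kalinin congruence on a GEA. -/
structure SKCong (E : Type u) [GEA E] (sim : E → E → Prop) : Prop where
  refl : ∀ e : E, sim e e
  symm : ∀ {e f : E}, sim e f → sim f e
  trans : ∀ {d e f : E}, sim d e → sim e f → sim d f
  sk1 : ∀ {e : E}, sim e zero → e = zero
  sk2 : ∀ {I : Type} (e f : I → E) (se sf : E), IsOrthosum e se →
    IsOrthosum f sf → (∀ i : I, sim (e i) (f i)) → sim se sf
  sk3d : ∀ {p s t : E}, perp s t → sim p (op s t) →
    ∃ e f : E, perp e f ∧ op e f = p ∧ sim e s ∧ sim f t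
  sk3e : ∀ {e f s t : E}, perp e f → perp s t → op e f = op s t →
    ∃ e₁ e₂ f₁ f₂ : E, perp e₁ e₂ ∧ op e₁ e₂ = e ∧ perp f₁ f₂ ∧ op f₁ f₂ = f ∧
      perp e₁ f₁ ∧ sim s (op e₁ f₁) ∧ perp e₂ f₂ ∧ sim t (op e₂ f₂)
  sk4a : ∀ {e f : E}, ¬ perp e f →
    ∃ e₁ f₁ : E, e₁ ≠ zero ∧ f₁ ≠ zero ∧ le e₁ e ∧ le f₁ f ∧ sim e₁ f₁
  sk4b : ∀ {e f : E}, ¬ le e f →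
    ∃ e₁ d₁ : E, e₁ ≠ zero ∧ d₁ ≠ zero ∧ le e₁ e ∧ perp d₁ f ∧ sim e₁ d₁

/-- Subequivalence: `f ≲ e`. -/
def Subeq (sim : E → E → Prop) (f e : E) : Prop :=
  ∃ e₁ : E, le e₁ e ∧ sim f e₁

/-- `e` and `f` are related. -/
def Related (sim : E → E → Prop) (e f : E) : Prop :=
  ∃ e₁ f₁ : E, e₁ ≠ zero ∧ f₁ ≠ zero ∧ le e₁ e ∧ le f₁ f ∧ sim e₁ f₁

/-- A hereditary subset. -/
def Hereditary (sim : E → E → Prop) (H : Set E) : Prop :=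
  ∀ h e : E, h ∈ H → Subeq sim e h → e ∈ H

/-- An exocentral mapping on a GEA. -/
structure Exocentral (π : E → E) : Prop where
  perp_map : ∀ {e f : E}, perp e f → perp (π e) (π f)
  op_map : ∀ {e f : E}, perp e f → π (op e f) = op (π e) (π f)
  idem : ∀ e : E, π (π e) = π e
  dec : ∀ e : E, le (π e) e
  orth : ∀ {e f : E}, π e = e → π f = zero → perp e f

/-- `π'` is the complementary mapping of `π` : `π'e = e ⊖ πe`. -/
def IsComplMap (π π' : E → E) : Prop :=
  ∀ e : E, perp (π e) (π' e) ∧ op (π e) (π' e) = e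

/-- `π` (with complement `π'`) splits the equivalence relation `sim`. -/
def Splits (sim : E → E → Prop) (π π' : E → E) : Prop :=
  ∀ e f : E, e ∈ Set.range π → f ∈ Set.range π' → sim e f →
    e = zero ∧ f = zero

/-- A hull system `(η_e)_{e ∈ E}` on a GEA, where `η e : E → E` is the hull
mapping indexed by `e`. -/
structure HullSystem (E : Type u) [GEA E] (η : E → E → E) : Prop where
  exo : ∀ e : E, Exocentral (η e)
  hs1 : ∀ x : E, η zero x = zero
  hs2 : ∀ e : E, η e e = e
  hs3 : ∀ e f x : E, η (η e f) x = η e (η f x)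
  hs3' : ∀ e f x : E, η e (η f x) = η f (η e x)

/-- A GEX-orthogonal family. -/
def GEXOrtho {I : Type} (e : I → E) : Prop :=
  ∃ π : I → E → E, (∀ i : I, Exocentral (π i)) ∧
    (∀ i j : I, i ≠ j → ∀ x : E, π i (π j x) = zero) ∧
    ∀ i : I, π i (e i) = e i

/-- Central orthocompleteness. -/
def CentrallyOC (E : Type u) [GEA E] : Prop :=
  ∀ (I : Type) (e : I → E), GEXOrtho e →
    (∃ m : E, IsOrthosum e m) ∧
    ∀ f : E, (∀ i : I, perp f (e i)) → ∀ m : E, IsOrthosum e m → perp f m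

/-- A dimension equivalence relation: an SK-congruence satisfying SK4a′. -/
def IsDER (E : Type u) [GEA E] (sim : E → E → Prop) : Prop :=
  SKCong E sim ∧
  ∀ e f : E, ¬ Related sim e f →
    ∃ π π' : E → E, Exocentral π ∧ IsComplMap π π' ∧ Splits sim π π' ∧
      π e = e ∧ π' f = f

/-- `η` is the hull system determined by the hull-determining set `Σ∼(E)` of
exocentral mappings splitting `sim` : each `η e` belongs to `Σ∼(E)` and is the
smallest member of `Σ∼(E)` fixing `e`. -/
def SigmaHull (sim : E → E → Prop) (η : E → E → E) : Prop :=
  (∀ e : E, ∃ π' : E → E, IsComplMap (η e) π' ∧ Splits sim (η e) π') ∧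
  ∀ (e : E) (π π' : E → E), Exocentral π → IsComplMap π π' →
    Splits sim π π' → π e = e →
      (∀ x : E, η e (π x) = η e x) ∧ (∀ x : E, π (η e x) = η e x)

/-- A simple element. -/
def Simple (sim : E → E → Prop) (k : E) : Prop :=
  ∀ e e' : E, perp e e' → op e e' = k → ¬ Related sim e e'

/-- A finite element. -/
def Finite' (sim : E → E → Prop) (f : E) : Prop :=
  ∀ e : E, le e f → sim e f → e = f

end GEA

namespace GEA

variable {E : Type u} [GEA E]

lemma perp_zero' (e : E) : perp (zero : E) e := perp_comm (perp_zero e)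

lemma zero_op (e : E) : op (zero : E) e = e := by
  rw [op_comm (perp_zero' e), op_zero]

lemma le_refl' (e : E) : le e e := ⟨zero, perp_zero e, op_zero e⟩

lemma zero_le' (e : E) : le (zero : E) e := ⟨e, perp_zero' e, zero_op e⟩

lemma assoc₁ {a b c : E} (hab : perp a b) (h : perp (op a b) c) :
    perp b c ∧ perp a (op b c) ∧ op (op a b) c = op a (op b c) := by
  have hc : perp c (op a b) := perp_comm h
  have hc' : perp c (op b a) := by rw [← op_comm hab]; exact hc
  have hcb : perp c b := assoc_perp₁ (perp_comm hab) hc'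
  have hbc : perp b c := perp_comm hcb
  have h1 : perp (op c b) a := assoc_perp₂ (perp_comm hab) hc'
  have h2 : perp a (op c b) := perp_comm h1
  have ha : perp a (op b c) := by rw [op_comm hbc]; exact h2
  refine ⟨hbc, ha, ?_⟩
  calc op (op a b) c = op c (op a b) := op_comm h
    _ = op c (op b a) := by rw [op_comm hab]
    _ = op (op c b) a := assoc_eq (perp_comm hab) hc'
    _ = op a (op c b) := op_comm h1
    _ = op a (op b c) := by rw [op_comm hcb]

lemma assoc₂ {a b c : E} (hbc : perp b c) (h : perp a (op b c)) :
    perp a b ∧ perp (op a b) c ∧ op (op a b) c = op a (op b c) :=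
  ⟨assoc_perp₁ hbc h, assoc_perp₂ hbc h, (assoc_eq hbc h).symm⟩

lemma swap' {a b c : E} (hbc : perp b c) (h : perp a (op b c)) :
    perp a c ∧ perp b (op a c) ∧ op a (op b c) = op b (op a c) := by
  obtain ⟨hab, habc, heq⟩ := assoc₂ hbc h
  have habc' : perp (op b a) c := by rw [← op_comm hab]; exact habc
  obtain ⟨hac, hbac, heq2⟩ := assoc₁ (perp_comm hab) habc'
  refine ⟨hac, hbac, ?_⟩
  rw [← heq, ← heq2, op_comm hab]

lemma perp_of_le {m x t : E} (h : le m x) (hx : perp x t) : perp m t := by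
  obtain ⟨c, hmc, rfl⟩ := h
  exact perp_comm (assoc_perp₁ hmc (perp_comm hx))

lemma perp_of_le' {t m x : E} (h : le m x) (hx : perp t x) : perp t m :=
  perp_comm (perp_of_le h (perp_comm hx))

lemma le_trans' {d e f : E} (h1 : le d e) (h2 : le e f) : le d f := by
  obtain ⟨a, hda, rfl⟩ := h1
  obtain ⟨b, hb, rfl⟩ := h2
  obtain ⟨hab, hd, heq⟩ := assoc₁ hda hb
  exact ⟨op a b, hd, heq.symm⟩

lemma le_op_left {a b : E} (h : perp a b) : le a (op a b) := ⟨b, h, rfl⟩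

lemma le_op_right {a b : E} (h : perp a b) : le b (op a b) :=
  ⟨a, perp_comm h, op_comm (perp_comm h)⟩

lemma op_le_op {r a b : E} (hrb : perp r b) (h : le a b) :
    le (op r a) (op r b) ∧ perp r a := by
  obtain ⟨c, hac, rfl⟩ := h
  obtain ⟨hra, hrac, heq⟩ := assoc₂ hac hrb
  exact ⟨⟨c, hrac, heq⟩, hra⟩

lemma le_cancel {r a b : E} (hra : perp r a) (hrb : perp r b)
    (h : le (op r a) (op r b)) : le a b := by
  obtain ⟨c, hc, heq⟩ := h
  obtain ⟨hac, hrac, heq2⟩ := assoc₁ hra hc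
  exact ⟨c, hac, cancel hrac hrb (heq2.symm.trans heq)⟩

section FinSumLemmas

variable {I : Type} {e : I → E}

lemma finsum_congr_set {s t : Finset I} {x : E} (hst : s = t)
    (h : FinSum e s x) : FinSum e t x := hst ▸ h

lemma finsum_eq_empty {s : Finset I} {x : E} (h : FinSum e s x) (hs : s = ∅) :
    x = zero := by
  induction h with
  | empty => rfl
  | cons h _ _ _ => exact absurd hs (by simp)

lemma finsum_mem [DecidableEq I] {s : Finset I} {x : E} (h : FinSum e s x) {i : I} (hi : i ∈ s) :
    ∃ y, perp (e i) y ∧ op (e i) y = x ∧ FinSum e (s.erase i) y := by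
  classical
  induction h with
  | empty => simp at hi
  | @cons s j x hj hfs hp ih =>
    rcases Finset.mem_cons.mp hi with rfl | hi'
    · exact ⟨x, hp, rfl, by rw [Finset.erase_cons]; exact hfs⟩
    · obtain ⟨y, hy1, hy2, hy3⟩ := ih hi'
      have hij : i ≠ j := fun hh => hj (hh ▸ hi')
      have hjy : perp (e j) (op (e i) y) := by rw [hy2]; exact hp
      obtain ⟨hjy', hiy', heq⟩ := swap' hy1 hjy
      have hjm : j ∉ s.erase i := fun hh => hj (Finset.mem_of_mem_erase hh)
      have hfs2 : FinSum e (Finset.cons j (s.erase i) hjm) (op (e j) y) :=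
        FinSum.cons hjm hy3 hjy'
      refine ⟨op (e j) y, hiy', ?_, ?_⟩
      · rw [← heq, hy2]
      · refine finsum_congr_set ?_ hfs2
        rw [Finset.cons_eq_insert, Finset.cons_eq_insert,
          Finset.erase_insert_of_ne hij.symm]

lemma finsum_unique {s : Finset I} {x y : E} (h1 : FinSum e s x)
    (h2 : FinSum e s y) : x = y := by
  classical
  induction h1 generalizing y with
  | empty => exact (finsum_eq_empty h2 rfl).symm
  | @cons s i x hi hfs hp ih =>
    obtain ⟨y', hp', heq, hfs'⟩ := finsum_mem h2 (Finset.mem_cons_self i s)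
    rw [Finset.erase_cons] at hfs'
    rw [← heq, ih hfs']

lemma finsum_subset {s t : Finset I} {x : E} (hst : s ⊆ t) (h : FinSum e t x) :
    ∃ y, FinSum e s y ∧ le y x := by
  classical
  induction h generalizing s with
  | empty =>
    have hs : s = ∅ := Finset.subset_empty.mp hst
    exact ⟨zero, hs ▸ FinSum.empty, zero_le' _⟩
  | @cons t i x hi hfs hp ih =>
    by_cases his : i ∈ s
    · have hsub : s.erase i ⊆ t := by
        intro a ha
        rcases Finset.mem_cons.mp (hst (Finset.mem_of_mem_erase ha)) with rfl | hh
        · exact absurd rfl (Finset.ne_of_mem_erase ha)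
        · exact hh
      obtain ⟨y, hy, hle⟩ := ih hsub
      have hpy : perp (e i) y := perp_of_le' hle hp
      refine ⟨op (e i) y, ?_, (op_le_op hp hle).1⟩
      refine finsum_congr_set ?_ (FinSum.cons (Finset.notMem_erase i s) hy hpy)
      rw [Finset.cons_eq_insert, Finset.insert_erase his]
    · have hsub : s ⊆ t := by
        intro a ha
        rcases Finset.mem_cons.mp (hst ha) with rfl | hh
        · exact absurd ha his
        · exact hh
      obtain ⟨y, hy, hle⟩ := ih hsub
      exact ⟨y, hy, le_trans' hle (le_op_right hp)⟩

lemma finsum_map {J : Type} (f : J ↪ I) {s : Finset J} {x : E}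
    (h : FinSum (e ∘ f) s x) : FinSum e (s.map f) x := by
  induction h with
  | empty => exact finsum_congr_set (by simp) FinSum.empty
  | @cons s i x hi hfs hp ih =>
    have hmem : f i ∉ s.map f := by simp [hi]
    have : FinSum e (Finset.cons (f i) (s.map f) hmem) (op (e (f i)) x) :=
      FinSum.cons hmem ih hp
    exact finsum_congr_set (Finset.map_cons f i s hi).symm this

lemma finsum_map_inv {J : Type} (f : J ↪ I) {s : Finset J} {x : E}
    (h : FinSum e (s.map f) x) : FinSum (e ∘ f) s x := by
  classical
  induction s using Finset.cons_induction generalizing x with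
  | empty => rw [finsum_eq_empty h (by simp)]; exact FinSum.empty
  | @cons i s hi ih =>
    rw [Finset.map_cons] at h
    obtain ⟨y, hp, heq, hfs⟩ := finsum_mem h (Finset.mem_cons_self _ _)
    rw [Finset.erase_cons] at hfs
    rw [← heq]
    exact FinSum.cons hi (ih hfs) hp

end FinSumLemmas

lemma isOrthosum_equiv {I J : Type} (σ : J ≃ I) {e : I → E} {m : E}
    (h : IsOrthosum e m) : IsOrthosum (e ∘ σ) m := by
  obtain ⟨ho, hub, hlub⟩ := h
  refine ⟨?_, ?_, ?_⟩
  · intro s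
    obtain ⟨x, hx⟩ := ho (s.map σ.toEmbedding)
    exact ⟨x, finsum_map_inv _ hx⟩
  · intro s x hx
    exact hub _ _ (finsum_map σ.toEmbedding hx)
  · intro b hb
    refine hlub b ?_
    intro t x hx
    have h2 : FinSum e ((t.map σ.symm.toEmbedding).map σ.toEmbedding) x := by
      rw [Finset.map_map,
        show σ.symm.toEmbedding.trans σ.toEmbedding = Function.Embedding.refl I by
          ext j; simp, Finset.map_refl]
      exact hx
    exact hb _ _ (finsum_map_inv _ h2)

def succEmb : ℕ ↪ ℕ := ⟨Nat.succ, Nat.succ_injective⟩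

lemma map_pred_succ {t : Finset ℕ} (h0 : (0 : ℕ) ∉ t) :
    (t.image Nat.pred).map succEmb = t := by
  ext k
  simp only [Finset.mem_map, Finset.mem_image, succEmb, Function.Embedding.coeFn_mk]
  constructor
  · rintro ⟨a, ⟨b, hb, rfl⟩, rfl⟩
    rwa [Nat.succ_pred_eq_of_pos (Nat.pos_of_ne_zero (fun hh => h0 (hh ▸ hb)))]
  · intro hk
    exact ⟨k.pred, ⟨k, hk, rfl⟩,
      Nat.succ_pred_eq_of_pos (Nat.pos_of_ne_zero (fun hh => h0 (hh ▸ hk)))⟩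

lemma isOrthosum_extend {u : ℕ → E} {m : E}
    (h : IsOrthosum (fun k => u (k + 1)) m) (hp : perp (u 0) m) :
    IsOrthosum u (op (u 0) m) := by
  classical
  obtain ⟨ho, hub, hlub⟩ := h
  have hcomp : (fun k => u (k + 1)) = u ∘ succEmb := rfl
  -- existence of partial sums over sets not containing 0
  have key : ∀ t : Finset ℕ, (0 : ℕ) ∉ t → ∃ y, FinSum u t y ∧ le y m := by
    intro t h0
    obtain ⟨y, hy⟩ := ho (t.image Nat.pred)
    refine ⟨y, ?_, hub _ _ hy⟩
    have := finsum_map succEmb (hcomp ▸ hy)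
    exact finsum_congr_set (map_pred_succ h0) this
  have keyinv : ∀ t : Finset ℕ, (0 : ℕ) ∉ t → ∀ y, FinSum u t y → le y m := by
    intro t h0 y hy
    obtain ⟨y', hy', hle⟩ := key t h0
    rw [finsum_unique hy hy']
    exact hle
  refine ⟨?_, ?_, ?_⟩
  · intro s
    by_cases h0 : (0 : ℕ) ∈ s
    · obtain ⟨y, hy, hle⟩ := key (s.erase 0) (Finset.notMem_erase 0 s)
      have hpy : perp (u 0) y := perp_of_le' hle hp
      refine ⟨op (u 0) y, finsum_congr_set ?_
        (FinSum.cons (Finset.notMem_erase 0 s) hy hpy)⟩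
      rw [Finset.cons_eq_insert, Finset.insert_erase h0]
    · obtain ⟨y, hy, _⟩ := key s h0
      exact ⟨y, hy⟩
  · intro s x hx
    by_cases h0 : (0 : ℕ) ∈ s
    · obtain ⟨y, hpy, heq, hfs⟩ := finsum_mem hx h0
      have hle : le y m := keyinv _ (Finset.notMem_erase 0 s) y hfs
      rw [← heq]
      exact (op_le_op hp hle).1
    · exact le_trans' (keyinv s h0 x hx) (le_op_right hp)
  · intro b hb
    -- u 0 ≤ b
    have hu0 : le (u 0) b := by
      have : FinSum u {0} (op (u 0) zero) := by
        refine finsum_congr_set ?_ (FinSum.cons (s := ∅) (by simp) FinSum.empty (perp_zero _))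
        rfl
      have := hb _ _ this
      rwa [op_zero] at this
    obtain ⟨b', hb', hbeq⟩ := hu0
    have hmb : le m b' := by
      refine hlub b' ?_
      intro s y hy
      have hy' : FinSum u (s.map succEmb) y := finsum_map succEmb (hcomp ▸ hy)
      have h0 : (0 : ℕ) ∉ s.map succEmb := by simp [succEmb]
      have hle : le y m := hub _ _ hy
      have hpy : perp (u 0) y := perp_of_le' hle hp
      have : FinSum u (Finset.cons 0 (s.map succEmb) h0) (op (u 0) y) :=
        FinSum.cons h0 hy' hpy
      have hby := hb _ _ this
      rw [← hbeq] at hby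
      exact le_cancel hpy hb' hby
    rw [← hbeq]
    exact (op_le_op hb' hmb).1

def flipPar : ℕ ≃ ℕ where
  toFun k := if k % 2 = 0 then k + 1 else k - 1
  invFun k := if k % 2 = 0 then k + 1 else k - 1
  left_inv k := by dsimp only; split <;> split <;> omega
  right_inv k := by dsimp only; split <;> split <;> omega

end GEA


namespace GEA

variable {E : Type u} [GEA E]

lemma cancel_sim {sim : E → E → Prop} (hsim : SKCong E sim) (hD : DedekindOC E)
    {x g h : E} (hgh : perp g h) (hx : perp x (op g h))
    (hs : sim x (op x (op g h))) : sim x (op x g) := by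
  classical
  -- step function producing the next level of the decomposition
  have step : ∀ p : {p : E // sim p x}, ∃ q : {p : E // sim p x} × E × E,
      perp q.2.1 q.2.2 ∧ perp q.1.1 (op q.2.1 q.2.2) ∧
      op q.1.1 (op q.2.1 q.2.2) = p.1 ∧ sim q.2.1 g ∧ sim q.2.2 h := by
    rintro ⟨p, hp⟩
    have h1 : sim p (op x (op g h)) := hsim.trans hp hs
    obtain ⟨a, f, hpf, hop, hax, hf⟩ := hsim.sk3d hx h1
    obtain ⟨G', H', hGH, hopGH, hGg, hHh⟩ := hsim.sk3d hgh hf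
    refine ⟨⟨⟨a, hax⟩, G', H'⟩, hGH, ?_, ?_, hGg, hHh⟩
    · rw [hopGH]; exact hpf
    · rw [hopGH]; exact hop
  choose F hF using step
  obtain ⟨X, hX0, hXs⟩ : ∃ X : ℕ → {p : E // sim p x},
      X 0 = ⟨x, hsim.refl x⟩ ∧ ∀ n, X (n + 1) = (F (X n)).1 :=
    ⟨fun n => Nat.rec ⟨x, hsim.refl x⟩ (fun _ p => (F p).1) n, rfl, fun _ => rfl⟩
  obtain ⟨G, H, hstep⟩ : ∃ G H : ℕ → E, ∀ n,
      perp (G n) (H n) ∧ perp (X (n + 1)).1 (op (G n) (H n)) ∧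
      op (X (n + 1)).1 (op (G n) (H n)) = (X n).1 ∧ sim (G n) g ∧ sim (H n) h := by
    refine ⟨fun n => (F (X n)).2.1, fun n => (F (X n)).2.2, fun n => ?_⟩
    rw [hXs n]
    exact hF (X n)
  -- the interleaved family
  set w : ℕ → E := fun k => if k % 2 = 0 then G (k / 2) else H (k / 2) with hw
  have hw1 : ∀ n, w (2 * n) = G n := by
    intro n
    have h1 : (2 * n) % 2 = 0 := by omega
    have h2 : (2 * n) / 2 = n := by omega
    simp [hw, h1, h2]
  have hw2 : ∀ n, w (2 * n + 1) = H n := by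
    intro n
    have h1 : (2 * n + 1) % 2 = 1 := by omega
    have h2 : (2 * n + 1) / 2 = n := by omega
    simp [hw, h1, h2]
  -- partial sums of w exist and complement X n inside x
  have hpart : ∀ n, ∃ S, FinSum w (Finset.range (2 * n)) S ∧
      perp (X n).1 S ∧ op (X n).1 S = x := by
    intro n
    induction n with
    | zero =>
      refine ⟨zero, by simpa using FinSum.empty, perp_zero _, ?_⟩
      rw [op_zero, hX0]
    | succ n ih =>
      obtain ⟨S, hS, hpS, hopS⟩ := ih
      obtain ⟨hBC, hABC, hXeq, _, _⟩ := hstep n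
      set A := (X (n + 1)).1
      set B := G n
      set C := H n
      -- x = (A ⊕ (B ⊕ C)) ⊕ S
      have hXS : perp (op A (op B C)) S := by rw [hXeq]; exact hpS
      obtain ⟨hDS, hAq, heq1⟩ := assoc₁ hABC hXS
      -- hDS : perp (B ⊕ C) S
      have hDS' : perp (op C B) S := by rw [← op_comm hBC]; exact hDS
      obtain ⟨hBS, hCq, heq2⟩ := assoc₁ (perp_comm hBC) hDS'
      -- new sum S' = C ⊕ (B ⊕ S)
      have hmem1 : 2 * n ∉ Finset.range (2 * n) := by simp
      have hfs1 : FinSum w (Finset.cons (2 * n) (Finset.range (2 * n)) hmem1)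
          (op (w (2 * n)) S) := FinSum.cons hmem1 hS (by rw [hw1]; exact hBS)
      have hmem2 : 2 * n + 1 ∉ Finset.cons (2 * n) (Finset.range (2 * n)) hmem1 := by
        simp
      have hfs2 : FinSum w (Finset.cons (2 * n + 1) _ hmem2)
          (op (w (2 * n + 1)) (op (w (2 * n)) S)) :=
        FinSum.cons hmem2 hfs1 (by rw [hw1, hw2]; exact hCq)
      refine ⟨op C (op B S), finsum_congr_set ?_ (by rwa [hw1, hw2] at hfs2), ?_, ?_⟩
      · rw [Finset.cons_eq_insert, Finset.cons_eq_insert,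
          show 2 * (n + 1) = (2 * n + 1) + 1 by ring, Finset.range_add_one,
          Finset.range_add_one]
      · rw [← heq2, ← op_comm hBC]; exact hAq
      · rw [← heq2, ← op_comm hBC, ← heq1, hXeq]; exact hopS
  have hXle : ∀ n, ∀ S, FinSum w (Finset.range (2 * n)) S → le S x := by
    intro n S hS
    obtain ⟨S', hS', hpS', hopS'⟩ := hpart n
    rw [finsum_unique hS hS']
    exact ⟨(X n).1, perp_comm hpS', by rw [op_comm (perp_comm hpS')]; exact hopS'⟩
  have hsubrange : ∀ s : Finset ℕ, s ⊆ Finset.range (2 * (s.sup id + 1)) := by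
    intro s k hk
    have := Finset.le_sup (f := id) hk
    simp only [id] at this
    simp only [Finset.mem_range]
    omega
  have hfam : OrthoFam w := by
    intro s
    obtain ⟨S, hS, _, _⟩ := hpart (s.sup id + 1)
    obtain ⟨y, hy, _⟩ := finsum_subset (hsubrange s) hS
    exact ⟨y, hy⟩
  have hbound : ∀ (s : Finset ℕ) (y : E), FinSum w s y → le y x := by
    intro s y hy
    obtain ⟨S, hS, _, _⟩ := hpart (s.sup id + 1)
    obtain ⟨y', hy', hle⟩ := finsum_subset (hsubrange s) hS
    rw [finsum_unique hy hy']
    exact le_trans' hle (hXle _ _ hS)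
  obtain ⟨m, hm⟩ := hD ℕ w hfam ⟨x, hbound⟩
  have hmx : le m x := hm.2.2 x hbound
  obtain ⟨R, hmR, hmRx⟩ := hmx
  have hRm : perp R m := perp_comm hmR
  have hxRm : op R m = x := by rw [op_comm hRm]; exact hmRx
  -- perp facts
  have hxg : perp x g := (assoc₂ hgh hx).1
  have hgm : perp g m := perp_comm (perp_of_le ⟨R, hmR, hmRx⟩ hxg)
  have hRmg : perp R (op m g) ∧ perp m g ∧ op (op R m) g = op R (op m g) := by
    have hx' : perp (op R m) g := by rw [hxRm]; exact hxg
    obtain ⟨h1, h2, h3⟩ := assoc₁ hRm hx'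
    exact ⟨h2, h1, h3⟩
  have hRgm : perp R (op g m) := by rw [op_comm hgm]; exact hRmg.1
  -- the two families
  set u : ℕ → E := fun k => Nat.casesOn (motive := fun _ => E) k R (fun j => w j) with hu
  set v2 : ℕ → E := fun j => Nat.casesOn (motive := fun _ => E) j g (fun i => (w ∘ flipPar) i) with hv2d
  set v : ℕ → E := fun k => Nat.casesOn (motive := fun _ => E) k R (fun j => v2 j) with hv
  have hum : IsOrthosum u (op (u 0) m) := isOrthosum_extend (u := u) (by exact hm) hRm
  have hm' : IsOrthosum (w ∘ flipPar) m := isOrthosum_equiv flipPar hm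
  have hv2 : IsOrthosum v2 (op g m) := isOrthosum_extend (u := v2) (by exact hm') hgm
  have hvm : IsOrthosum v (op (v 0) (op g m)) := isOrthosum_extend (u := v) (by exact hv2) hRgm
  -- termwise similarity
  have hterm : ∀ k, sim (u k) (v k) := by
    intro k
    match k with
    | 0 => exact hsim.refl R
    | 1 =>
      have : w 0 = G 0 := hw1 0
      show sim (w 0) g
      rw [this]
      exact (hstep 0).2.2.2.1
    | (j + 2) =>
      show sim (w (j + 1)) (w (flipPar j))
      rcases Nat.even_or_odd j with ⟨i, hi⟩ | ⟨i, hi⟩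
      · have hfe : flipPar j = j + 1 := by
          show (if j % 2 = 0 then j + 1 else j - 1) = j + 1
          rw [if_pos (by omega)]
        rw [hfe]
        exact hsim.refl _
      · have hfe : flipPar j = 2 * i := by
          show (if j % 2 = 0 then j + 1 else j - 1) = 2 * i
          rw [if_neg (by omega)]
          omega
        have hj1 : j + 1 = 2 * (i + 1) := by omega
        rw [hfe, hj1, hw1, hw1]
        exact hsim.trans (hstep (i + 1)).2.2.2.1 (hsim.symm (hstep i).2.2.2.1)
  have hfinal := hsim.sk2 u v _ _ hum hvm hterm
  have hu0 : u 0 = R := rfl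
  have hv0 : v 0 = R := rfl
  rw [hu0, hv0, hxRm] at hfinal
  have hrhs : op R (op g m) = op x g := by
    rw [op_comm hgm, ← hRmg.2.2, hxRm]
  rw [hrhs] at hfinal
  exact hfinal

end GEA


/-- subequivalence is a preorder and satisfies the
Cantor–Schröder–Bernstein property. -/
theorem subeq_preorder_CSB {E : Type u} [GEA E]
    (sim : E → E → Prop) (hsim : GEA.SKCong E sim) (hD : GEA.DedekindOC E) :
    (∀ e : E, GEA.Subeq sim e e) ∧
    (∀ d e f : E, GEA.Subeq sim d e → GEA.Subeq sim e f → GEA.Subeq sim d f) ∧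
    (∀ e f : E, GEA.Subeq sim e f → GEA.Subeq sim f e → sim e f) := by
  refine ⟨fun e => ⟨e, GEA.le_refl' e, hsim.refl e⟩, ?_, ?_⟩
  · rintro d e f ⟨e₂, he₂, hde⟩ ⟨f₂, hf₂, hef⟩
    obtain ⟨r, her, hopr⟩ := he₂
    have h1 : sim f₂ (GEA.op e₂ r) := by rw [hopr]; exact hsim.symm hef
    obtain ⟨a, b, hab, hopab, hae, hbr⟩ := hsim.sk3d her h1
    exact ⟨a, GEA.le_trans' ⟨b, hab, hopab⟩ hf₂, hsim.trans hde (hsim.symm hae)⟩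
  · rintro e f ⟨f₁, hf₁, hef⟩ ⟨e₁, he₁, hfe⟩
    obtain ⟨cc, hcc, hecc⟩ := he₁
    obtain ⟨dd, hdd, hfdd⟩ := hf₁
    have h1 : sim e₁ (GEA.op f₁ dd) := by rw [hfdd]; exact hsim.symm hfe
    obtain ⟨a, bb, habb, hopabb, haf₁, hbdd⟩ := hsim.sk3d hdd h1
    have hcc' : GEA.perp (GEA.op a bb) cc := by rw [hopabb]; exact hcc
    obtain ⟨hbbcc, habc, heq⟩ := GEA.assoc₁ habb hcc'
    have hae : sim a e := hsim.trans haf₁ (hsim.symm hef)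
    have hs : sim a (GEA.op a (GEA.op bb cc)) := by
      rw [← heq, hopabb, hecc]; exact hae
    have hkey := GEA.cancel_sim hsim hD hbbcc habc hs
    rw [hopabb] at hkey
    exact hsim.trans (hsim.trans (hsim.symm hae) hkey) (hsim.symm hfe)
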